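/- For every natural number m ≥ 2, consider the two persistence diagrams D₁ consisting of the points (0,∞) and (i, m+i) for i = 0, 1, …, m, each with multiplicity one (plus the diagonal points with infinite multiplicity), and D₂ consisting of the points (0,∞) and (i, m+i) for i = 0, 1, …, m−1, each with multiplicity one (plus the diagonal points with infinite multiplicity). Then the matching distance between D₁ and D₂ equals m/2, i.e. d_match(D₁, D₂) = m/2. -/

import Mathlib

/-- The absolute difference of two extended reals, as an element of `[0,∞]`
(equal to `0` when the two values coincide, in particular when both are `∞`). -/
noncomputable def erealDist (x y : EReal) : ENNReal :=
  if x = y then 0 else max (x - y).abs (y - x).abs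

/-- The max-norm distance between two points `(u,v)` of the extended half-plane,
where births are real and deaths are extended reals (possibly `∞`). -/
noncomputable def pointDist (p q : ℝ × EReal) : ENNReal :=
  max (ENNReal.ofReal |p.1 - q.1|) (erealDist p.2 q.2)

/-- The max-norm distance from a point `(u,v)` to the diagonal, namely `(v - u)/2`. -/
noncomputable def diagDist (p : ℝ × EReal) : ENNReal :=
  erealDist (p.1 : EReal) p.2 / 2

/-- The cost of a matching: the matched pairs are recorded in `M`, while `R₁` and `R₂`
collect the points of the two diagrams that are matched to diagonal points. The cost is the
maximal displacement (in the max-norm) of the points induced by the matching. -/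
noncomputable def matchingCost (M : Multiset ((ℝ × EReal) × (ℝ × EReal)))
    (R₁ R₂ : Multiset (ℝ × EReal)) : ENNReal :=
  (M.map fun pq => pointDist pq.1 pq.2).sup ⊔ ((R₁ + R₂).map diagDist).sup

/-- The matching (bottleneck) distance between two persistence diagrams, encoded as
multisets of off-diagonal points `(u,v)` with `u < v ≤ ∞`: the infimum, over all bijective
matchings between the diagrams (points may be matched to diagonal points), of the cost of
the matching. -/
noncomputable def dMatch (D₁ D₂ : Multiset (ℝ × EReal)) : ENNReal :=
  sInf {c | ∃ (M : Multiset ((ℝ × EReal) × (ℝ × EReal))) (R₁ R₂ : Multiset (ℝ × EReal)),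
    D₁ = M.map Prod.fst + R₁ ∧ D₂ = M.map Prod.snd + R₂ ∧ c = matchingCost M R₁ R₂}

/-
The diagram `D₁` is `D₂` plus the single point `(m, 2m)`. Matching `D₂` to itself identically and
sending `(m, 2m)` to the diagonal costs its distance `m/2` to the diagonal. Conversely, `D₁` has
one point more than `D₂`, so every matching sends some point of `D₁` to the diagonal, and every
point of `D₁` lies at distance at least `m/2` from it.
-/

lemma erealDist_self (x : EReal) : erealDist x x = 0 := by
  simp [erealDist]

lemma pointDist_self (p : ℝ × EReal) : pointDist p p = 0 := by
  simp [pointDist, erealDist_self]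

lemma erealDist_coe_coe (a b : ℝ) : erealDist a b = ENNReal.ofReal |a - b| := by
  unfold erealDist
  split_ifs with h
  · simp [EReal.coe_eq_coe_iff.mp h]
  · rw [← EReal.coe_sub, ← EReal.coe_sub, EReal.abs_def, EReal.abs_def, abs_sub_comm b a,
      max_self]

lemma erealDist_coe_top (a : ℝ) : erealDist a ⊤ = ⊤ := by
  rw [erealDist, if_neg (EReal.coe_ne_top a), EReal.top_sub_coe, EReal.abs_top]
  exact max_eq_right le_top

lemma diagDist_coe (u v : ℝ) : diagDist (u, (v : EReal)) = ENNReal.ofReal |v - u| / 2 := by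
  rw [diagDist, erealDist_coe_coe, abs_sub_comm]

lemma diagDist_top (u : ℝ) : diagDist (u, ⊤) = ⊤ := by
  simp [diagDist, erealDist_coe_top, ENNReal.top_div_of_ne_top]

lemma diagDist_coe_add_self (d u : ℝ) (hd : 0 ≤ d) :
    diagDist (u, ((d + u : ℝ) : EReal)) = ENNReal.ofReal d / 2 := by
  rw [diagDist_coe, add_sub_cancel_right, abs_of_nonneg hd]

lemma dMatch_add_le (D R : Multiset (ℝ × EReal)) :
    dMatch (D + R) D ≤ (R.map diagDist).sup := by
  refine sInf_le ⟨D.map fun p => (p, p), R, 0, by simp, by simp, ?_⟩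
  have hid : ((D.map fun p => (p, p)).map fun pq => pointDist pq.1 pq.2).sup = 0 :=
    le_bot_iff.1 (Multiset.sup_le.2 fun _ h => by
      simp only [Multiset.map_map, Function.comp_def, pointDist_self, Multiset.mem_map] at h
      obtain ⟨-, -, rfl⟩ := h
      rfl)
  rw [matchingCost, hid, add_zero]
  exact (zero_max _).symm

lemma le_dMatch_of_card_lt {D₁ D₂ : Multiset (ℝ × EReal)} {c : ENNReal}
    (hcard : Multiset.card D₂ < Multiset.card D₁) (hc : ∀ p ∈ D₁, c ≤ diagDist p) :
    c ≤ dMatch D₁ D₂ := by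
  refine le_sInf ?_
  rintro _ ⟨M, R₁, R₂, h₁, h₂, rfl⟩
  have hR₁ : R₁ ≠ 0 := by
    rintro rfl
    rw [h₁, h₂] at hcard
    simp at hcard
  obtain ⟨p, hp⟩ := Multiset.exists_mem_of_ne_zero hR₁
  calc c ≤ diagDist p := hc p (h₁ ▸ Multiset.mem_add.2 (Or.inr hp))
    _ ≤ matchingCost M R₁ R₂ :=
      le_sup_of_le_right <|
        Multiset.le_sup (Multiset.mem_map_of_mem _ (Multiset.mem_add.2 (Or.inl hp)))

theorem dMatch_example_general (m : ℕ) :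
    dMatch
      (((0 : ℝ), (⊤ : EReal)) ::ₘ
        (Multiset.range (m + 1)).map (fun i => ((i : ℝ), (((m : ℝ) + i : ℝ) : EReal))))
      (((0 : ℝ), (⊤ : EReal)) ::ₘ
        (Multiset.range m).map (fun i => ((i : ℝ), (((m : ℝ) + i : ℝ) : EReal)))) =
      (m : ENNReal) / 2 := by
  -- the cast `(i : ℝ)` makes Lean coerce `Multiset.range` itself to `Multiset ℝ` via the multiset
  -- monad; this rewrites both diagrams as images of `Multiset.range` under a map on `ℕ`
  simp only [bind_pure_comp, Multiset.fmap_def, Multiset.map_map, Function.comp_def]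
  set f : ℕ → ℝ × EReal := fun i => ((i : ℝ), (((m : ℝ) + i : ℝ) : EReal))
  have hdiag : ∀ i, diagDist (f i) = (m : ENNReal) / 2 := fun i => by
    rw [diagDist_coe_add_self _ _ m.cast_nonneg, ENNReal.ofReal_natCast]
  have hsplit : ((0 : ℝ), ⊤) ::ₘ (Multiset.range (m + 1)).map f =
      (((0 : ℝ), ⊤) ::ₘ (Multiset.range m).map f) + {f m} := by
    rw [Multiset.range_succ, Multiset.map_cons, Multiset.cons_add, add_comm,
      Multiset.singleton_add]
  refine le_antisymm ?upper ?lower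
  case upper =>
    rw [hsplit]
    exact (dMatch_add_le _ {f m}).trans_eq (by simp [hdiag])
  case lower =>
    refine le_dMatch_of_card_lt (by simp) fun p hp => ?_
    rcases Multiset.mem_cons.1 hp with rfl | hp
    · rw [diagDist_top]; exact le_top
    · obtain ⟨i, -, rfl⟩ := Multiset.mem_map.1 hp
      exact (hdiag i).ge

/-- For every natural number `m ≥ 2`, the matching distance between the persistence diagram
`D₁` with points `(0,∞)` and `(i, m+i)` for `i = 0,…,m`, and the persistence diagram `D₂`
with points `(0,∞)` and `(i, m+i)` for `i = 0,…,m−1` (each with multiplicity one, plus the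
diagonal points), equals `m/2`. -/
theorem dMatch_example (m : ℕ) (hm : 2 ≤ m) :
    dMatch
      (((0 : ℝ), (⊤ : EReal)) ::ₘ
        (Multiset.range (m + 1)).map (fun i => ((i : ℝ), (((m : ℝ) + i : ℝ) : EReal))))
      (((0 : ℝ), (⊤ : EReal)) ::ₘ
        (Multiset.range m).map (fun i => ((i : ℝ), (((m : ℝ) + i : ℝ) : EReal)))) =
      (m : ENNReal) / 2 :=
  dMatch_example_general m
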